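/- Let Δ be a Lie derivation of R = R_n(K,J). Then Δ(y e_{1,n}) has nonzero components only in positions (1,t) for 1 ≤ t ≤ n, positions (s,n) for s ≠ 1, diagonal positions (k,k) for k ≠ 1, n, and positions (n−1,1), (n−1,2), (n,1), (n,2). -/

import Mathlib

/-- Membership in `R = R_n(K,J)`: entries on and above the main diagonal lie in `J`. -/
def Rmem {K : Type*} [Ring K] {n : ℕ} (J : AddSubgroup K)
    (M : Matrix (Fin n) (Fin n) K) : Prop :=
  ∀ i j : Fin n, i ≤ j → M i j ∈ J

/-- A Lie derivation of `R = R_n(K,J)`. -/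
def IsLieDerOn {K : Type*} [Ring K] {n : ℕ} (J : AddSubgroup K)
    (D : Matrix (Fin n) (Fin n) K → Matrix (Fin n) (Fin n) K) : Prop :=
  (∀ A, Rmem J A → Rmem J (D A)) ∧
  (∀ A B, Rmem J A → Rmem J B → D (A + B) = D A + D B) ∧
  (∀ A B, Rmem J A → Rmem J B →
    D (A * B - B * A) = (D A * B - B * D A) + (A * D B - D B * A))

/-!
A matrix unit `e_{ij}` with `j < i`, `i ≠ n` and `j ≠ 1` lies in `R` and commutes with `y e_{1n}`, so
`[Δ(y e_{1n}), e_{ij}] = -[y e_{1n}, Δ e_{ij}]`, which vanishes outside row `1` and column `n`.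
Read in column `j` and in row `i`, this kills `Δ(y e_{1n})_{si}` for `s ≠ i` and
`Δ(y e_{1n})_{jt}` for `t ≠ j`. The choices `(i, j) = (t, 2)` for `t ≥ 3` and `(i, j) = (s + 1, s)`
for `t ≤ 2` reach every position not listed.
-/

open Matrix

section

variable {K : Type*} [Ring K] {n : ℕ} {J : AddSubgroup K}

lemma rmem_zero : Rmem J (0 : Matrix (Fin n) (Fin n) K) :=
  fun _ _ _ => J.zero_mem

lemma rmem_single_of_mem {y : K} (hy : y ∈ J) (a b : Fin n) : Rmem J (single a b y) := by
  intro p q _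
  by_cases h : a = p ∧ b = q
  · rw [← h.1, ← h.2, single_apply_same]
    exact hy
  · rw [single_apply_of_ne _ _ _ _ _ h]
    exact J.zero_mem

lemma rmem_single_of_lt {i j : Fin n} (hji : j < i) (c : K) : Rmem J (single i j c) := by
  intro p q hpq
  have h : ¬(i = p ∧ j = q) := by
    rintro ⟨rfl, rfl⟩
    exact hji.not_ge hpq
  rw [single_apply_of_ne _ _ _ _ _ h]
  exact J.zero_mem

lemma commutator_single_apply_eq_zero (a b : Fin n) (y : K) (M : Matrix (Fin n) (Fin n) K)
    {s t : Fin n} (hs : s ≠ a) (ht : t ≠ b) :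
    (single a b y * M - M * single a b y) s t = 0 := by
  rw [Matrix.sub_apply, single_mul_apply_of_ne _ _ _ _ _ hs, mul_single_apply_of_ne _ _ _ _ _ ht,
    sub_zero]

namespace IsLieDerOn

variable {Δ : Matrix (Fin n) (Fin n) K → Matrix (Fin n) (Fin n) K}

lemma map_zero (hΔ : IsLieDerOn J Δ) : Δ 0 = 0 := by
  have h := hΔ.2.1 0 0 rmem_zero rmem_zero
  rw [add_zero] at h
  exact left_eq_add.mp h

lemma commutator_map_single_apply_eq_zero (hΔ : IsLieDerOn J Δ) {y : K} (hy : y ∈ J)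
    {a b i j : Fin n} (hji : j < i) (hbi : b ≠ i) (hja : j ≠ a) {s t : Fin n}
    (hs : s ≠ a) (ht : t ≠ b) :
    (Δ (single a b y) * single i j 1 - single i j 1 * Δ (single a b y) :
      Matrix (Fin n) (Fin n) K) s t = 0 := by
  have hcomm : single a b y * single i j (1 : K) - single i j 1 * single a b y = 0 := by
    rw [single_mul_single_of_ne _ _ _ _ hbi, single_mul_single_of_ne _ _ _ _ hja, sub_zero]
  have h := hΔ.2.2 _ _ (rmem_single_of_mem hy a b) (rmem_single_of_lt hji 1)
  rw [hcomm, hΔ.map_zero] at h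
  have hst := congrFun (congrFun h s) t
  rw [Matrix.add_apply, commutator_single_apply_eq_zero a b y _ hs ht, add_zero] at hst
  exact hst.symm

lemma map_single_apply_eq_zero_of_col (hΔ : IsLieDerOn J Δ) {y : K} (hy : y ∈ J)
    {a b i j s : Fin n} (hji : j < i) (hbi : b ≠ i) (hja : j ≠ a) (hjb : j ≠ b)
    (hsa : s ≠ a) (hsi : s ≠ i) : Δ (single a b y) s i = 0 := by
  have h := hΔ.commutator_map_single_apply_eq_zero hy hji hbi hja hsa hjb
  rwa [Matrix.sub_apply, mul_single_apply_same, mul_one, single_mul_apply_of_ne _ _ _ _ _ hsi,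
    sub_zero] at h

lemma map_single_apply_eq_zero_of_row (hΔ : IsLieDerOn J Δ) {y : K} (hy : y ∈ J)
    {a b i j t : Fin n} (hji : j < i) (hbi : b ≠ i) (hja : j ≠ a) (hia : i ≠ a)
    (htb : t ≠ b) (htj : t ≠ j) : Δ (single a b y) j t = 0 := by
  have h := hΔ.commutator_map_single_apply_eq_zero hy hji hbi hja hia htb
  rwa [Matrix.sub_apply, mul_single_apply_of_ne _ _ _ _ _ htj, single_mul_apply_same, one_mul,
    zero_sub, neg_eq_zero] at h

end IsLieDerOn

end

/-- For a Lie derivation `Δ` of `R`, the matrix `Δ(y e_{1,n})` (for `y ∈ J`)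
can be nonzero only in row `1`, column `n`, on the main diagonal, or in positions
`(n-1,1), (n-1,2), (n,1), (n,2)` (1-based; here 0-based `(n-2,0), (n-2,1), (n-1,0), (n-1,1)`). -/
theorem lie_derivation_corner_shape {K : Type*} [Ring K] {n : ℕ} (hn : 4 ≤ n)
    (J : AddSubgroup K)
    (Δ : Matrix (Fin n) (Fin n) K → Matrix (Fin n) (Fin n) K)
    (hΔ : IsLieDerOn J Δ) :
    ∀ y ∈ J, ∀ s t : Fin n,
      (s : ℕ) ≠ 0 → (t : ℕ) ≠ n - 1 → s ≠ t →
      ¬((s : ℕ) = n - 2 ∧ (t : ℕ) = 0) → ¬((s : ℕ) = n - 2 ∧ (t : ℕ) = 1) →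
      ¬((s : ℕ) = n - 1 ∧ (t : ℕ) = 0) → ¬((s : ℕ) = n - 1 ∧ (t : ℕ) = 1) →
      Δ (Matrix.single ⟨0, by omega⟩ ⟨n - 1, by omega⟩ y) s t = 0 := by
  intro y hy s t hs ht hst hx1 hx2 hx3 hx4
  rw [Ne, Fin.ext_iff] at hst
  by_cases htwo : 2 ≤ (t : ℕ)
  · exact hΔ.map_single_apply_eq_zero_of_col hy (j := ⟨1, by omega⟩)
      (Fin.lt_def.mpr (by simp; omega)) (by simp [Fin.ext_iff]; omega) (by simp [Fin.ext_iff])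
      (by simp [Fin.ext_iff]; omega) (by simp [Fin.ext_iff]; omega) (by simp [Fin.ext_iff]; omega)
  · have hs1 : (s : ℕ) + 1 < n := by omega
    exact hΔ.map_single_apply_eq_zero_of_row hy (i := ⟨s + 1, hs1⟩)
      (Fin.lt_def.mpr (by simp)) (by simp [Fin.ext_iff]; omega) (by simp [Fin.ext_iff]; omega)
      (by simp [Fin.ext_iff]) (by simp [Fin.ext_iff]; omega) (by simp [Fin.ext_iff]; omega)
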